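/- Suppose G is connected and satisfies the curvature-dimension inequality CD(m,0), and f : V → ℝ is a nonconstant harmonic eigenfunction of the Laplacian with nontrivial eigenvalue λ > 0, i.e., −Δf(x) = λ f(x) for all x ∈ V. Then for every vertex x ∈ V, |∇f|²(x) ≤ (8 − 2/m) · λ · max_{z ∈ V} f²(z). -/

import Mathlib

open Finset

/-- The weighted degree `d(x) = Σ_y w(x,y)`. -/
noncomputable def deg {V : Type*} [Fintype V] (w : V → V → ℝ) (x : V) : ℝ :=
  ∑ y, w x y

/-- The graph Laplacian `Δf(x) = (1/d(x)) Σ_y w(x,y) (f(y) − f(x))`. -/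
noncomputable def lap {V : Type*} [Fintype V] (w : V → V → ℝ) (f : V → ℝ) (x : V) : ℝ :=
  (1 / deg w x) * ∑ y, w x y * (f y - f x)

/-- The bilinear operator `Γ(f,g)(x) = (1/2)(Δ(fg)(x) − f(x)Δg(x) − g(x)Δf(x))`. -/
noncomputable def gam {V : Type*} [Fintype V] (w : V → V → ℝ) (f g : V → ℝ) (x : V) : ℝ :=
  (1 / 2) * (lap w (fun y => f y * g y) x - f x * lap w g x - g x * lap w f x)

/-- The curvature operator `Γ₂(f,g)(x) = (1/2)(ΔΓ(f,g)(x) − Γ(f,Δg)(x) − Γ(g,Δf)(x))`. -/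
noncomputable def gam2 {V : Type*} [Fintype V] (w : V → V → ℝ) (f g : V → ℝ) (x : V) : ℝ :=
  (1 / 2) * (lap w (gam w f g) x - gam w f (lap w g) x - gam w g (lap w f) x)

/-- The gradient square `|∇f|²(x) = (1/d(x)) Σ_y w(x,y) (f(x) − f(y))²`. -/
noncomputable def gradsq {V : Type*} [Fintype V] (w : V → V → ℝ) (f : V → ℝ) (x : V) : ℝ :=
  (1 / deg w x) * ∑ y, w x y * (f x - f y) ^ 2

/-- The curvature-dimension inequality `CD(m,κ)`. -/
def CD {V : Type*} [Fintype V] (w : V → V → ℝ) (m κ : ℝ) : Prop :=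
  ∀ (f : V → ℝ) (x : V), gam2 w f f x ≥ (1 / m) * (lap w f x) ^ 2 + κ * gam w f f x

/-
At a vertex `v` maximising `g = |∇f|² + 4λ f²` the maximum principle gives `Δg(v) ≤ 0`.
Bochner's formula `Γ₂(f,f) = ¼ Δ|∇f|² − Γ(f, Δf)` together with `CD(m,0)` bounds `Δ|∇f|²` from
below, and `Δ(f²) = 2fΔf + |∇f|²` computes the other half of `Δg`; for an eigenfunction this yields
`|∇f|²(v) ≤ (4 − 2/m) λ f(v)²`, hence `g ≤ g(v) ≤ (8 − 2/m) λ f(v)²` everywhere.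
-/

section Laplacian

variable {V : Type*} [Fintype V] (w : V → V → ℝ)

lemma lap_add (f g : V → ℝ) (x : V) :
    lap w (fun y => f y + g y) x = lap w f x + lap w g x := by
  simp only [lap, ← mul_add, ← Finset.sum_add_distrib]
  congr 1
  exact Finset.sum_congr rfl fun y _ => by ring

lemma lap_const_mul (c : ℝ) (f : V → ℝ) (x : V) :
    lap w (fun y => c * f y) x = c * lap w f x := by
  simp only [lap, Finset.mul_sum]
  exact Finset.sum_congr rfl fun y _ => by ring

lemma lap_nonpos_of_forall_le (hnonneg : ∀ x y, 0 ≤ w x y) {g : V → ℝ} {v : V}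
    (hv : ∀ y, g y ≤ g v) : lap w g v ≤ 0 :=
  mul_nonpos_of_nonneg_of_nonpos
    (one_div_nonneg.mpr (Finset.sum_nonneg fun y _ => hnonneg v y))
    (Finset.sum_nonpos fun y _ => mul_nonpos_of_nonneg_of_nonpos (hnonneg v y) (by linarith [hv y]))

lemma gradsq_nonneg (hnonneg : ∀ x y, 0 ≤ w x y) (f : V → ℝ) (x : V) : 0 ≤ gradsq w f x :=
  mul_nonneg (one_div_nonneg.mpr (Finset.sum_nonneg fun y _ => hnonneg x y))
    (Finset.sum_nonneg fun y _ => mul_nonneg (hnonneg x y) (sq_nonneg _))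

lemma gam_self (f : V → ℝ) (x : V) : gam w f f x = gradsq w f x / 2 := by
  have h : ∑ y, w x y * (f y * f y - f x * f x) - 2 * f x * ∑ y, w x y * (f y - f x)
      = ∑ y, w x y * (f x - f y) ^ 2 := by
    rw [Finset.mul_sum, ← Finset.sum_sub_distrib]
    exact Finset.sum_congr rfl fun y _ => by ring
  simp only [gam, lap, gradsq]
  linear_combination (1 / (2 * deg w x)) * h

lemma lap_sq (f : V → ℝ) (x : V) :
    lap w (fun y => f y ^ 2) x = 2 * f x * lap w f x + gradsq w f x := by
  have h := gam_self w f x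
  simp only [gam, ← sq] at h
  linear_combination 2 * h

lemma gam_const_mul_right (f g : V → ℝ) (c : ℝ) (x : V) :
    gam w f (fun y => c * g y) x = c * gam w f g x := by
  have hfg : (fun y => f y * (c * g y)) = fun y => c * (f y * g y) := by
    funext y
    ring
  simp only [gam, hfg, lap_const_mul]
  ring

lemma gam2_self (f : V → ℝ) (x : V) :
    gam2 w f f x = lap w (gradsq w f) x / 4 - gam w f (lap w f) x := by
  have hgam : gam w f f = fun y => (1 / 2) * gradsq w f y := by
    funext y
    rw [gam_self]
    ring
  rw [gam2, hgam, lap_const_mul]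
  ring

end Laplacian

section Eigenfunction

variable {V : Type*} [Fintype V] {w : V → V → ℝ} {f : V → ℝ} {lam : ℝ}

lemma lap_gradsq_ge_of_CD {m : ℝ} (hCD : CD w m 0) (hf : ∀ x, -lap w f x = lam * f x) (x : V) :
    4 / m * lam ^ 2 * f x ^ 2 - 2 * lam * gradsq w f x ≤ lap w (gradsq w f) x := by
  have hlap : lap w f = fun y => -lam * f y := by
    funext y
    linear_combination -hf y
  have hCDx := hCD f x
  rw [gam2_self, hlap, gam_const_mul_right, gam_self] at hCDx
  linear_combination 4 * hCDx

lemma gradsq_le_of_isMax (hnonneg : ∀ x y, 0 ≤ w x y) {m : ℝ} (hCD : CD w m 0) (hlam : 0 < lam)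
    (hf : ∀ x, -lap w f x = lam * f x) {v : V}
    (hv : ∀ y, gradsq w f y + 4 * lam * f y ^ 2 ≤ gradsq w f v + 4 * lam * f v ^ 2) :
    gradsq w f v ≤ (4 - 2 / m) * lam * f v ^ 2 := by
  have hmax : lap w (fun y => gradsq w f y + 4 * lam * f y ^ 2) v ≤ 0 :=
    lap_nonpos_of_forall_le w hnonneg hv
  have hlapv : lap w f v = -lam * f v := by linear_combination -hf v
  rw [lap_add, lap_const_mul, lap_sq, hlapv] at hmax
  have hbochner := lap_gradsq_ge_of_CD hCD hf v
  refine le_of_mul_le_mul_left ?_ hlam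
  linear_combination (hmax + hbochner) / 2

lemma harnack_le_of_isMax (hnonneg : ∀ x y, 0 ≤ w x y) {m : ℝ} (hCD : CD w m 0) (hlam : 0 < lam)
    (hf : ∀ x, -lap w f x = lam * f x) {v : V}
    (hv : ∀ y, gradsq w f y + 4 * lam * f y ^ 2 ≤ gradsq w f v + 4 * lam * f v ^ 2) (y : V) :
    gradsq w f y + 4 * lam * f y ^ 2 ≤ (8 - 2 / m) * lam * f v ^ 2 := by
  linarith [hv y, gradsq_le_of_isMax hnonneg hCD hlam hf hv]

end Eigenfunction

theorem harnack_inequality_nonneg_curvature_general {V : Type*} [Fintype V] (w : V → V → ℝ)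
    (hnonneg : ∀ x y, 0 ≤ w x y)
    (m : ℝ) (hCD : CD w m 0)
    (lam : ℝ) (hlam : 0 < lam) (f : V → ℝ) (hf : ∀ x, -lap w f x = lam * f x)
    (x : V) :
    gradsq w f x ≤ (8 - 2 / m) * lam * ⨆ z, f z ^ 2 := by
  have : Nonempty V := ⟨x⟩
  obtain ⟨v, hv⟩ := Finite.exists_max fun y => gradsq w f y + 4 * lam * f y ^ 2
  have hbound := harnack_le_of_isMax hnonneg hCD hlam hf hv
  have hgrad := gradsq_nonneg w hnonneg f
  have hfv : f v ^ 2 ≤ ⨆ z, f z ^ 2 :=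
    le_ciSup (f := fun z => f z ^ 2) (Set.finite_range _).bddAbove v
  have hsup : (⨆ z, f z ^ 2) ≤ (8 - 2 / m) * f v ^ 2 / 4 :=
    ciSup_le fun y => by nlinarith [hbound y, hgrad y]
  -- When `8 − 2/m < 0`, `hsup` squeezes `⨆ f²` to zero.
  have hct : (8 - 2 / m) * f v ^ 2 ≤ (8 - 2 / m) * ⨆ z, f z ^ 2 := by
    rcases le_or_gt 0 (8 - 2 / m) with hc | hc
    · exact mul_le_mul_of_nonneg_left hfv hc
    · have hfv0 : f v ^ 2 = 0 := by nlinarith [sq_nonneg (f v)]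
      have hsup0 : (⨆ z, f z ^ 2) = 0 := by
        rw [hfv0] at hsup hfv
        linarith
      rw [hfv0, hsup0]
  have hfx : 0 ≤ 4 * lam * f x ^ 2 := by positivity
  calc gradsq w f x ≤ lam * ((8 - 2 / m) * f v ^ 2) := by linarith [hbound x]
    _ ≤ lam * ((8 - 2 / m) * ⨆ z, f z ^ 2) := mul_le_mul_of_nonneg_left hct hlam.le
    _ = (8 - 2 / m) * lam * ⨆ z, f z ^ 2 := by ring

theorem harnack_inequality_nonneg_curvature {V : Type*} [Fintype V] (w : V → V → ℝ)
    (hsymm : ∀ x y, w x y = w y x) (hnonneg : ∀ x y, 0 ≤ w x y)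
    (hloop : ∀ x, w x x = 0) (hdeg : ∀ x, 0 < deg w x)
    (hconn : (SimpleGraph.fromRel fun x y => 0 < w x y).Connected)
    (m : ℝ) (hm : 0 < m) (hCD : CD w m 0)
    (lam : ℝ) (hlam : 0 < lam) (f : V → ℝ) (hf : ∀ x, -lap w f x = lam * f x)
    (hnc : ∃ x y, f x ≠ f y) (x : V) :
    gradsq w f x ≤ (8 - 2 / m) * lam * ⨆ z, f z ^ 2 :=
  harnack_inequality_nonneg_curvature_general w hnonneg m hCD lam hlam f hf x
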